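/- arXiv:1510.00692 — 4 statements merged into one kernel-verified Lean document; each statement's English description precedes it below -/
import Mathlib

section
/- For all g, s ∈ ℝ\{0} with s(g−1) + 1 ≠ 0, one has the identity i(g)·j(s) = j(α_g(s))·i(β_s(g)) in G; explicitly, (g, g−1)·(s, 0) = (α_g(s), 0)·(β_s(g), β_s(g) − 1), where α_g(s) = gs/(s(g−1)+1) and β_s(g) = s(g−1)+1. -/
/-- Multiplication on `G = {(a,b) ∈ ℝ² : a ≠ 0}`: `(a,b)·(c,d) = (ac, d + cb)`. -/
def Gmul (p q : ℝ × ℝ) : ℝ × ℝ := (p.1 * q.1, q.2 + q.1 * p.2)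

/-- `i(g) = (g, g − 1)`. -/
def imap (g : ℝ) : ℝ × ℝ := (g, g - 1)

/-- `j(s) = (s, 0)`. -/
def jmap (s : ℝ) : ℝ × ℝ := (s, 0)

theorem stmt_1_general (g s : ℝ) (h : s * (g - 1) + 1 ≠ 0) :
    Gmul (imap g) (jmap s) =
      Gmul (jmap (g * s / (s * (g - 1) + 1))) (imap (s * (g - 1) + 1)) := by
  refine Prod.ext ?_ ?_
  · exact (div_mul_cancel₀ (g * s) h).symm
  · simp only [Gmul, imap, jmap]
    ring

/-- For `g, s ∈ ℝ\{0}` with `s(g−1)+1 ≠ 0`, one has `i(g)·j(s) = j(α_g(s))·i(β_s(g))`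
where `α_g(s) = gs/(s(g−1)+1)` and `β_s(g) = s(g−1)+1`. -/
theorem stmt_1 (g s : ℝ) (hg : g ≠ 0) (hs : s ≠ 0) (h : s * (g - 1) + 1 ≠ 0) :
    Gmul (imap g) (jmap s) =
      Gmul (jmap (g * s / (s * (g - 1) + 1))) (imap (s * (g - 1) + 1)) :=
  stmt_1_general g s h
end

section
/- For all g, s, h ∈ ℝ\{0} such that h(s−1) + 1 ≠ 0 and h(gs−1) + 1 ≠ 0, one has α_{gs}(h) = α_g(α_s(h)), i.e. (gs)h/(h(gs−1)+1) = g·α_s(h)/(α_s(h)(g−1)+1) where α_s(h) = sh/(h(s−1)+1); in particular the denominator α_s(h)(g−1)+1 is nonzero under these hypotheses. -/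
/-!
Writing `α_g(s) = g s / (s (g - 1) + 1)`, the denominator of `α_g(α_s(h))` simplifies to
`(h (g s - 1) + 1) / (h (s - 1) + 1)`, which is nonzero exactly when `α_{gs}(h)` is defined;
dividing `g α_s(h) = g s h / (h (s - 1) + 1)` by it, the factors `h (s - 1) + 1` cancel.
-/

namespace AxbAction

variable {K : Type*} [Field K]

def act (g s : K) : K := g * s / (s * (g - 1) + 1)

theorem act_mul_sub_one_add_one {s h : K} (g : K) (hs : h * (s - 1) + 1 ≠ 0) :
    act s h * (g - 1) + 1 = (h * (g * s - 1) + 1) / (h * (s - 1) + 1) := by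
  rw [act, eq_div_iff hs]
  field_simp
  ring

theorem act_mul_sub_one_add_one_ne_zero {g s h : K} (hs : h * (s - 1) + 1 ≠ 0)
    (hgs : h * (g * s - 1) + 1 ≠ 0) : act s h * (g - 1) + 1 ≠ 0 := by
  rw [act_mul_sub_one_add_one g hs]
  exact div_ne_zero hgs hs

/-- When `α_{gs}(h)` is undefined, both sides are `0` by the convention `x / 0 = 0`. -/
theorem act_mul {s h : K} (g : K) (hs : h * (s - 1) + 1 ≠ 0) :
    act (g * s) h = act g (act s h) :=
  calc act (g * s) h
      = g * (s * h / (h * (s - 1) + 1)) / ((h * (g * s - 1) + 1) / (h * (s - 1) + 1)) := by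
        rw [act, mul_div_assoc', div_div_div_cancel_right₀ hs, mul_assoc]
    _ = act g (act s h) := by rw [act, act_mul_sub_one_add_one g hs, act]

end AxbAction

open AxbAction in
theorem stmt_2_general (g s h : ℝ)
    (h1 : h * (s - 1) + 1 ≠ 0) (h2 : h * (g * s - 1) + 1 ≠ 0) :
    (s * h / (h * (s - 1) + 1)) * (g - 1) + 1 ≠ 0 ∧
    (g * s) * h / (h * (g * s - 1) + 1) =
      g * (s * h / (h * (s - 1) + 1)) /
        ((s * h / (h * (s - 1) + 1)) * (g - 1) + 1) :=
  ⟨act_mul_sub_one_add_one_ne_zero h1 h2, act_mul g h1⟩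

/-- For `g, s, h ∈ ℝ\{0}` with `h(s−1)+1 ≠ 0` and `h(gs−1)+1 ≠ 0`,
one has `α_{gs}(h) = α_g(α_s(h))` where `α_g(s) = gs/(s(g−1)+1)`;
in particular the denominator `α_s(h)(g−1)+1` is nonzero. -/
theorem stmt_2 (g s h : ℝ) (hg : g ≠ 0) (hs : s ≠ 0) (hh : h ≠ 0)
    (h1 : h * (s - 1) + 1 ≠ 0) (h2 : h * (g * s - 1) + 1 ≠ 0) :
    (s * h / (h * (s - 1) + 1)) * (g - 1) + 1 ≠ 0 ∧
    (g * s) * h / (h * (g * s - 1) + 1) =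
      g * (s * h / (h * (s - 1) + 1)) /
        ((s * h / (h * (s - 1) + 1)) * (g - 1) + 1) :=
  stmt_2_general g s h h1 h2
end

section
/- For all g, h, t ∈ ℝ\{0} with t(g−1) + 1 ≠ 0 and ht(g−1) + 1 ≠ 0, one has the compatibility relation α_g(ht) = α_{β_t(g)}(h)·α_g(t), i.e. g(ht)/(ht(g−1)+1) = (β_t(g)·h/(h(β_t(g)−1)+1))·(gt/(t(g−1)+1)), where α_g(s) = gs/(s(g−1)+1) and β_t(g) = t(g−1)+1. -/
namespace AxbMatchedPair

variable {K : Type*} [Field K]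

def beta (s g : K) : K := s * (g - 1) + 1

def alpha (g s : K) : K := g * s / beta s g

theorem beta_mul (h t g : K) : beta (h * t) g = beta h (beta t g) := by
  unfold beta
  ring

/- By `beta_mul` both sides have denominator `β_{ht}(g)`; the extra factor `β_t(g)` on the right
cancels, and when `β_{ht}(g) = 0` both sides are `0` under the convention `x / 0 = 0`. -/
theorem alpha_mul {g h t : K} (hβ : beta t g ≠ 0) :
    alpha g (h * t) = alpha (beta t g) h * alpha g t := by
  rw [alpha, alpha, alpha, beta_mul, div_mul_div_comm,
    mul_comm (beta h _), ← mul_div_mul_left _ _ hβ]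
  ring

end AxbMatchedPair

theorem stmt_5_general (g h t : ℝ)
    (h1 : t * (g - 1) + 1 ≠ 0) :
    g * (h * t) / ((h * t) * (g - 1) + 1) =
      ((t * (g - 1) + 1) * h / (h * ((t * (g - 1) + 1) - 1) + 1)) *
        (g * t / (t * (g - 1) + 1)) :=
  AxbMatchedPair.alpha_mul h1

/-- For `g, h, t ∈ ℝ\{0}` with `t(g−1)+1 ≠ 0` and `ht(g−1)+1 ≠ 0`, one has
`α_g(ht) = α_{β_t(g)}(h)·α_g(t)`, where `α_g(s) = gs/(s(g−1)+1)` and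
`β_t(g) = t(g−1)+1`. -/
theorem stmt_5 (g h t : ℝ) (hg : g ≠ 0) (hh : h ≠ 0) (ht : t ≠ 0)
    (h1 : t * (g - 1) + 1 ≠ 0) (h2 : h * t * (g - 1) + 1 ≠ 0) :
    g * (h * t) / ((h * t) * (g - 1) + 1) =
      ((t * (g - 1) + 1) * h / (h * ((t * (g - 1) + 1) - 1) + 1)) *
        (g * t / (t * (g - 1) + 1)) :=
  stmt_5_general g h t h1
end

section
/- For all a, c > 0 and b, d, x ∈ ℝ with c + dx > 0 and ac + (ad + b/c)x > 0, one has β_x((a,b)·(c,d)) = β_{α_{(c,d)}(x)}(a,b) · β_x(c,d) in G₁; explicitly, writing x' = x/(c(c+dx)), one has (ac + (ad+b/c)x, ad + b/c) = (a + bx', b)·(c + dx, d), where the product on the right is the G₁-multiplication (p,q)·(r,s) = (pr, ps + q/r); in particular a + bx' > 0 under these hypotheses. -/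
/-- Multiplication on `G₁ = {(a,b) ∈ ℝ² : a > 0}`: `(p,q)·(r,s) = (pr, ps + q/r)`. -/
noncomputable def G1mul (p q : ℝ × ℝ) : ℝ × ℝ := (p.1 * q.1, p.1 * q.2 + p.2 / q.1)

/- With `x' = α_{(c,d)}(x)` and `u = ac + (ad + b/c)x`, one has `a + bx' = u / (c + dx)`: the first
coordinate of `β_{x'}(a,b)` is that of `β_x((a,b)·(c,d))` divided by `c + dx`. This gives positivity,
and since `(u/r, b)·(r, d) = (u, (ud + b)/r)`, the identity reduces to a field computation. -/

section Field

variable {K : Type*} [Field K]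

theorem add_mul_div_mul_add_eq_div {a b c d x : K} (hc : c ≠ 0) (hcdx : c + d * x ≠ 0) :
    a + b * (x / (c * (c + d * x))) = (a * c + (a * d + b / c) * x) / (c + d * x) := by
  rw [eq_div_iff hcdx, add_mul, mul_assoc, div_mul_eq_mul_div, mul_div_mul_right _ _ hcdx]
  field_simp
  ring

theorem add_mul_mul_add_div_eq {a b c d x : K} (hc : c ≠ 0) (hcdx : c + d * x ≠ 0) :
    ((a * c + (a * d + b / c) * x) * d + b) / (c + d * x) = a * d + b / c := by
  rw [div_eq_iff hcdx]
  field_simp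
  ring

end Field

theorem G1mul_div_left (u b r d : ℝ) (hr : r ≠ 0) :
    G1mul (u / r, b) (r, d) = (u, (u * d + b) / r) := by
  simp only [G1mul, Prod.mk.injEq]
  constructor <;> field_simp

theorem stmt_13_general (a c b d x : ℝ) (hc : 0 < c)
    (h1 : 0 < c + d * x) (h2 : 0 < a * c + (a * d + b / c) * x) :
    0 < a + b * (x / (c * (c + d * x))) ∧
    (a * c + (a * d + b / c) * x, a * d + b / c) =
      G1mul (a + b * (x / (c * (c + d * x))), b) (c + d * x, d) := by
  rw [add_mul_div_mul_add_eq_div hc.ne' h1.ne', G1mul_div_left _ _ _ _ h1.ne',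
    add_mul_mul_add_div_eq hc.ne' h1.ne']
  exact ⟨div_pos h2 h1, rfl⟩

/-- For `a, c > 0` and `b, d, x ∈ ℝ` with `c + dx > 0` and `ac + (ad + b/c)x > 0`,
one has `β_x((a,b)·(c,d)) = β_{α_{(c,d)}(x)}(a,b)·β_x(c,d)` in `G₁`; explicitly,
with `x' = x/(c(c+dx))`, `(ac + (ad+b/c)x, ad + b/c) = (a + bx', b)·(c + dx, d)`;
in particular `a + bx' > 0`. -/
theorem stmt_13 (a c b d x : ℝ) (ha : 0 < a) (hc : 0 < c)
    (h1 : 0 < c + d * x) (h2 : 0 < a * c + (a * d + b / c) * x) :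
    0 < a + b * (x / (c * (c + d * x))) ∧
    (a * c + (a * d + b / c) * x, a * d + b / c) =
      G1mul (a + b * (x / (c * (c + d * x))), b) (c + d * x, d) :=
  stmt_13_general a c b d x hc h1 h2
end
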